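/- Let X and Y be Banach spaces over 𝕂 (= ℝ or ℂ) and let T : X → Y be a bounded linear operator. If the adjoint T* : Y* → X* quasi attains its norm, then T* attains its norm: there exists y₀* ∈ Y* with ‖y₀*‖ = 1 and ‖T* y₀*‖ = ‖T*‖. -/

import Mathlib

/-!
By Banach–Alaoglu the dual unit ball is weak*-compact, and `T*` is weak*-continuous, so
`T*(B_{Y*})` is weak*-compact, hence weak*-closed and a fortiori norm-closed. A quasi-attaining
point therefore already lies in `T*(B_{Y*})`, i.e. `‖T* g‖ = ‖T*‖` for some `‖g‖ ≤ 1`. If `‖g‖ < 1`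
this forces `T* = 0`, and then any norm-one functional will do.
-/

variable (𝕜 : Type*) {X Y : Type*} [RCLike 𝕜]
  [NormedAddCommGroup X] [NormedSpace 𝕜 X]
  [NormedAddCommGroup Y] [NormedSpace 𝕜 Y]

/-- The (Banach space) adjoint of `T`, acting between dual spaces by `y* ↦ y* ∘ T`. -/
noncomputable def operatorAdjoint (T : X →L[𝕜] Y) :
    (Y →L[𝕜] 𝕜) →L[𝕜] (X →L[𝕜] 𝕜) :=
  (ContinuousLinearMap.compL 𝕜 X Y 𝕜).flip T

noncomputable def weakAdjoint (T : X →L[𝕜] Y) : WeakDual 𝕜 Y → WeakDual 𝕜 X :=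
  fun g => (g : Y →L[𝕜] 𝕜).comp T

theorem continuous_weakAdjoint (T : X →L[𝕜] Y) : Continuous (weakAdjoint 𝕜 T) :=
  WeakDual.continuous_of_continuous_eval fun x => WeakDual.eval_continuous (T x)

theorem isClosed_image_closedBall_operatorAdjoint (T : X →L[𝕜] Y) (r : ℝ) :
    IsClosed (operatorAdjoint 𝕜 T '' Metric.closedBall 0 r) := by
  have hweak : IsClosed (weakAdjoint 𝕜 T '' (WeakDual.toStrongDual ⁻¹' Metric.closedBall 0 r)) :=
    ((WeakDual.isCompact_closedBall 0 r).image (continuous_weakAdjoint 𝕜 T)).isClosed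
  have himage : operatorAdjoint 𝕜 T '' Metric.closedBall 0 r =
      StrongDual.toWeakDual ⁻¹'
        (weakAdjoint 𝕜 T '' (WeakDual.toStrongDual ⁻¹' Metric.closedBall 0 r)) := by
    ext u
    constructor
    · rintro ⟨g, hg, rfl⟩
      exact ⟨StrongDual.toWeakDual g, hg, rfl⟩
    · rintro ⟨g, hg, hgu⟩
      exact ⟨WeakDual.toStrongDual g, hg, hgu⟩
  rw [himage]
  exact hweak.preimage NormedSpace.Dual.toWeakDual_continuous

variable {𝕜}

theorem ContinuousLinearMap.exists_norm_eq_one_norm_apply_eq_opNorm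
    {E F : Type*} [NormedAddCommGroup E] [NormedSpace 𝕜 E] [Nontrivial E]
    [SeminormedAddCommGroup F] [NormedSpace 𝕜 F]
    (S : E →L[𝕜] F) {z : E} (hz : ‖z‖ ≤ 1) (hSz : ‖S z‖ = ‖S‖) :
    ∃ w : E, ‖w‖ = 1 ∧ ‖S w‖ = ‖S‖ := by
  rcases hz.eq_or_lt with hz_one | hz_lt
  · exact ⟨z, hz_one, hSz⟩
  have hS : ‖S‖ = 0 := by
    have := S.le_opNorm z
    nlinarith [norm_nonneg S]
  obtain ⟨v, hv⟩ := exists_ne (0 : E)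
  refine ⟨(‖v‖⁻¹ : 𝕜) • v, norm_smul_inv_norm hv, le_antisymm ?_ (hS ▸ norm_nonneg _)⟩
  simpa [hS] using S.le_opNorm ((‖v‖⁻¹ : 𝕜) • v)

theorem adjoint_quasi_attains_implies_attains_general {𝕜 X Y : Type*} [RCLike 𝕜]
    [NormedAddCommGroup X] [NormedSpace 𝕜 X]
    [NormedAddCommGroup Y] [NormedSpace 𝕜 Y] [Nontrivial Y]
    (T : X →L[𝕜] Y)
    (hQNA : ∃ u ∈ closure (⇑(operatorAdjoint 𝕜 T) '' Metric.closedBall 0 1),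
      ‖u‖ = ‖operatorAdjoint 𝕜 T‖) :
    ∃ y₀star : Y →L[𝕜] 𝕜, ‖y₀star‖ = 1 ∧
      ‖operatorAdjoint 𝕜 T y₀star‖ = ‖operatorAdjoint 𝕜 T‖ := by
  obtain ⟨u, hu_mem, hu_norm⟩ := hQNA
  rw [(isClosed_image_closedBall_operatorAdjoint 𝕜 T 1).closure_eq] at hu_mem
  obtain ⟨g, hg, rfl⟩ := hu_mem
  exact (operatorAdjoint 𝕜 T).exists_norm_eq_one_norm_apply_eq_opNorm
    (mem_closedBall_zero_iff.mp hg) hu_norm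

/-- if the adjoint `T*` of a bounded operator `T` between Banach spaces quasi
attains its norm, then `T*` attains its norm. -/
theorem adjoint_quasi_attains_implies_attains {𝕜 X Y : Type*} [RCLike 𝕜]
    [NormedAddCommGroup X] [NormedSpace 𝕜 X] [CompleteSpace X]
    [NormedAddCommGroup Y] [NormedSpace 𝕜 Y] [CompleteSpace Y] [Nontrivial Y]
    (T : X →L[𝕜] Y)
    (hQNA : ∃ u ∈ closure (⇑(operatorAdjoint 𝕜 T) '' Metric.closedBall 0 1),
      ‖u‖ = ‖operatorAdjoint 𝕜 T‖) :
    ∃ y₀star : Y →L[𝕜] 𝕜, ‖y₀star‖ = 1 ∧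
      ‖operatorAdjoint 𝕜 T y₀star‖ = ‖operatorAdjoint 𝕜 T‖ :=
  adjoint_quasi_attains_implies_attains_general T hQNA
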